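/- Fix real constants m > 0, k ≠ 0, M > 0, set Ñ₁ = 1, Ñ₂ = M, Ñ₃ = 1, and fix natural numbers i, h, l. On the open set {I₁,I₂,I₃ > 0} ⊂ ℝ⁶ with coordinates (I₁,I₂,I₃,φ¹,φ²,φ³), define the vector field Γ'_{ih} = (1/(3+i)) Σ_{j=1}^3 Ñ_j^h I_j^{h+1} (∂/∂I_j + ∂/∂φ^j) and the functions H'_l = −mk²/((2−l) I₃^{2−l}) for l ≠ 2 and H'_2 = mk² ln(I₃). Then the directional derivative of H'_l along Γ'_{ih} satisfies: ⟨dH'_l, Γ'_{ih}⟩ = mk²/(3+i) if h + l = 2, and ⟨dH'_l, Γ'_{ih}⟩ = −((2 − (h+l))/(3+i)) H'_{l+h} if h + l ≠ 2. -/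

import Mathlib

open scoped BigOperators

/-- Phase space with Delaunay-type coordinates `z.1 = (I₁,I₂,I₃)` and
angles `z.2 = (φ¹,φ²,φ³)`. -/
abbrev PhaseSpace := (Fin 3 → ℝ) × (Fin 3 → ℝ)

/-- Lie bracket of vector fields:
`[X,Y](z) = (DY)(z)·X(z) − (DX)(z)·Y(z)`. -/
noncomputable def lieB (X Y : PhaseSpace → PhaseSpace) (z : PhaseSpace) : PhaseSpace :=
  fderiv ℝ Y z (X z) - fderiv ℝ X z (Y z)

/-- The constants `Ñ₁ = 1, Ñ₂ = M, Ñ₃ = 1`. -/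
noncomputable def Ntil (M : ℝ) : Fin 3 → ℝ := ![1, M, 1]

/-- The vector fields `Γ'_{ih} = (1/(3+i)) Σ_j Ñ_j^h I_j^{h+1} (∂/∂I_j + ∂/∂φ^j)`. -/
noncomputable def Gam' (M : ℝ) (i h : ℕ) (z : PhaseSpace) : PhaseSpace :=
  ((fun j => (1 / (3 + (i : ℝ))) * (Ntil M j) ^ h * (z.1 j) ^ (h + 1)),
   (fun j => (1 / (3 + (i : ℝ))) * (Ntil M j) ^ h * (z.1 j) ^ (h + 1)))

/-- The hierarchy of Hamiltonians: `H'_l = −mk²/((2−l) I₃^{2−l})` for `l ≠ 2`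
and `H'_2 = mk² ln I₃`. -/
noncomputable def Hfam (m k : ℝ) (l : ℕ) (z : PhaseSpace) : ℝ :=
  if l = 2 then m * k ^ 2 * Real.log (z.1 2)
  else -(m * k ^ 2) / ((2 - (l : ℝ)) * (z.1 2) ^ ((2 : ℝ) - (l : ℝ)))

/-! Every `H'_l` is a primitive of `mk² x^(l-3)`, evaluated at `x = I₃`, and `Γ'_{ih}` moves `I₃`
with speed `I₃^(h+1)/(3+i)`; so `⟨dH'_l, Γ'_{ih}⟩ = mk² I₃^(h+l-2)/(3+i)`, which is the constant
`mk²/(3+i)` when `h + l = 2` and a multiple of `H'_{l+h}` otherwise. -/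

open Real

lemma div_mul_rpow_sub_two_eq {y : ℝ} (a s : ℝ) (hy : 0 ≤ y) :
    a / ((2 - s) * y ^ (2 - s)) = a / (2 - s) * y ^ (s - 2) := by
  rw [div_mul_eq_div_div, div_eq_mul_inv _ (y ^ _), ← rpow_neg hy, neg_sub]

lemma hasDerivAt_neg_div_mul_rpow (c : ℝ) {s x : ℝ} (hs : s ≠ 2) (hx : 0 < x) :
    HasDerivAt (fun y => -c / ((2 - s) * y ^ (2 - s))) (c * x ^ (s - 3)) x := by
  have hpow : HasDerivAt (fun y => -c / (2 - s) * y ^ (s - 2))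
      (-c / (2 - s) * ((s - 2) * x ^ (s - 2 - 1))) x :=
    (hasDerivAt_rpow_const (Or.inl hx.ne')).const_mul _
  have heq : (fun y => -c / ((2 - s) * y ^ (2 - s))) =ᶠ[nhds x]
      fun y => -c / (2 - s) * y ^ (s - 2) := by
    filter_upwards [eventually_gt_nhds hx] with y hy
    exact div_mul_rpow_sub_two_eq _ _ hy.le
  refine (hpow.congr_of_eventuallyEq heq).congr_deriv ?_
  have h2s : 2 - s ≠ 0 := sub_ne_zero.2 hs.symm
  rw [show s - 2 - 1 = s - 3 by ring]
  field_simp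
  ring

noncomputable def hamProfile (m k : ℝ) (l : ℕ) (x : ℝ) : ℝ :=
  if l = 2 then m * k ^ 2 * Real.log x
  else -(m * k ^ 2) / ((2 - (l : ℝ)) * x ^ ((2 : ℝ) - (l : ℝ)))

lemma hasDerivAt_hamProfile (m k : ℝ) (l : ℕ) {x : ℝ} (hx : 0 < x) :
    HasDerivAt (hamProfile m k l) (m * k ^ 2 * x ^ ((l : ℝ) - 3)) x := by
  by_cases hl : l = 2
  · subst hl
    have hlog := (hasDerivAt_log hx.ne').const_mul (m * k ^ 2)
    refine (hlog.congr_of_eventuallyEq (.of_eq (funext fun y => if_pos rfl))).congr_deriv ?_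
    norm_num [rpow_neg_one]
  · have hprof : hamProfile m k l = fun y => -(m * k ^ 2) / ((2 - (l : ℝ)) * y ^ (2 - (l : ℝ))) :=
      funext fun y => if_neg hl
    rw [hprof]
    exact hasDerivAt_neg_div_mul_rpow _ (by exact_mod_cast hl) hx

lemma fderiv_Hfam_apply (m k : ℝ) (l : ℕ) {z : PhaseSpace} (hz : 0 < z.1 2) (v : PhaseSpace) :
    fderiv ℝ (Hfam m k l) z v = m * k ^ 2 * z.1 2 ^ ((l : ℝ) - 3) * v.1 2 := by
  have hI₃ := (hasFDerivAt_apply (𝕜 := ℝ) 2 z.1).comp z (hasFDerivAt_fst (p := z))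
  have hH := (hasDerivAt_hamProfile m k l hz).comp_hasFDerivAt z hI₃
  rw [hH.fderiv (f := Hfam m k l)]
  simp

lemma Hfam_of_ne_two (m k : ℝ) {n : ℕ} (hn : n ≠ 2) {z : PhaseSpace} (hz : 0 ≤ z.1 2) :
    Hfam m k n z = -(m * k ^ 2) / (2 - n) * z.1 2 ^ ((n : ℝ) - 2) := by
  rw [Hfam, if_neg hn, div_mul_rpow_sub_two_eq _ _ hz]

lemma Gam'_fst_two (M : ℝ) (i h : ℕ) (z : PhaseSpace) :
    (Gam' M i h z).1 2 = z.1 2 ^ (h + 1) / (3 + i) := by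
  simp [Gam', Ntil, div_eq_inv_mul]

lemma fderiv_Hfam_Gam' (m k M : ℝ) (i h l : ℕ) {z : PhaseSpace} (hz : 0 < z.1 2) :
    fderiv ℝ (Hfam m k l) z (Gam' M i h z) = m * k ^ 2 / (3 + i) * z.1 2 ^ ((h : ℝ) + l - 2) := by
  have hexp : z.1 2 ^ ((h : ℝ) + l - 2) = z.1 2 ^ ((l : ℝ) - 3) * z.1 2 ^ (h + 1) := by
    rw [← rpow_natCast, ← rpow_add hz]
    congr 1
    push_cast
    ring
  rw [fderiv_Hfam_apply m k l hz, Gam'_fst_two, hexp]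
  ring

theorem stmt19_general (m k M : ℝ) (i h l : ℕ) :
    ∀ z : PhaseSpace, (∀ j : Fin 3, 0 < z.1 j) →
      (h + l = 2 →
        fderiv ℝ (Hfam m k l) z (Gam' M i h z) = m * k ^ 2 / (3 + (i : ℝ))) ∧
      (h + l ≠ 2 →
        fderiv ℝ (Hfam m k l) z (Gam' M i h z)
          = -((2 - ((h : ℝ) + (l : ℝ))) / (3 + (i : ℝ))) * Hfam m k (l + h) z) := by
  intro z hz
  rw [fderiv_Hfam_Gam' m k M i h l (hz 2)]
  refine ⟨fun hhl => ?_, fun hhl => ?_⟩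
  · have hexp : (h : ℝ) + l - 2 = 0 := by
      rw [sub_eq_zero]
      exact_mod_cast hhl
    rw [hexp, rpow_zero, mul_one]
  · have h2 : (2 : ℝ) - (h + l) ≠ 0 := by
      rw [sub_ne_zero]
      exact_mod_cast hhl.symm
    rw [Hfam_of_ne_two m k (by omega) (hz 2).le, Nat.cast_add, add_comm (l : ℝ)]
    field_simp

/-- The directional derivative of `H'_l` along `Γ'_{ih}` on `{I₁,I₂,I₃ > 0}`:
`⟨dH'_l, Γ'_{ih}⟩ = mk²/(3+i)` if `h + l = 2`, and
`⟨dH'_l, Γ'_{ih}⟩ = −((2−(h+l))/(3+i)) H'_{l+h}` if `h + l ≠ 2`. -/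
theorem stmt19 (m k M : ℝ) (hm : 0 < m) (hk : k ≠ 0) (hM : 0 < M) (i h l : ℕ) :
    ∀ z : PhaseSpace, (∀ j : Fin 3, 0 < z.1 j) →
      (h + l = 2 →
        fderiv ℝ (Hfam m k l) z (Gam' M i h z) = m * k ^ 2 / (3 + (i : ℝ))) ∧
      (h + l ≠ 2 →
        fderiv ℝ (Hfam m k l) z (Gam' M i h z)
          = -((2 - ((h : ℝ) + (l : ℝ))) / (3 + (i : ℝ))) * Hfam m k (l + h) z) :=
  stmt19_general m k M i h l
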